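/- arXiv:math/0505473 — 2 statements merged into one kernel-verified Lean document; each statement's English description precedes it below -/
import Mathlib

section
/- Let Q be a face of P_a not contained in any coordinate hyperplane, and choose L_Q with L_Q = 1 on Q and L_Q > 1 on P_a \ Q. Then L_Q(e) > 0, and every element of R_Q is at most -L_Q(e); in particular every element of R_Q is a negative rational number. -/
open Set

namespace BS

def toR {n : ℕ} (u : Fin n → ℤ) : Fin n → ℝ := fun i => (u i : ℝ)

def natR {n : ℕ} (u : Fin n → ℕ) : Fin n → ℝ := fun i => (u i : ℝ)

def natZ {n : ℕ} (u : Fin n → ℕ) : Fin n → ℤ := fun i => (u i : ℤ)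

/-- `Γ` is the exponent set of a nonzero monomial ideal. -/
def IsMonIdeal {n : ℕ} (Γ : Set (Fin n → ℕ)) : Prop :=
  Γ.Nonempty ∧ ∀ u ∈ Γ, ∀ w : Fin n → ℕ, u + w ∈ Γ

/-- The Newton polyhedron: convex hull of the exponent set. -/
def newton {n : ℕ} (Γ : Set (Fin n → ℕ)) : Set (Fin n → ℝ) :=
  convexHull ℝ (natR '' Γ)

/-- The subsemigroup (containing 0) of ℤⁿ generated by differences u - v,
u ∈ Γ, v ∈ Γ ∩ Q. -/
def diffMonoid {n : ℕ} (Γ : Set (Fin n → ℕ)) (Q : Set (Fin n → ℝ)) :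
    AddSubmonoid (Fin n → ℤ) :=
  AddSubmonoid.closure {d | ∃ u ∈ Γ, ∃ v ∈ Γ, natR v ∈ Q ∧ d = natZ u - natZ v}

/-- M_Q : the translate by e = (1,...,1) of the difference semigroup. -/
def MQ {n : ℕ} (Γ : Set (Fin n → ℕ)) (Q : Set (Fin n → ℝ)) : Set (Fin n → ℤ) :=
  {m | m - 1 ∈ diffMonoid Γ Q}

/-- M_Q^{(k)} = k·v₀ + M_Q. -/
def MQk {n : ℕ} (Γ : Set (Fin n → ℕ)) (Q : Set (Fin n → ℝ)) (v0 : Fin n → ℕ) (k : ℕ) :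
    Set (Fin n → ℤ) :=
  {m | m - (k : ℤ) • natZ v0 ∈ MQ Γ Q}

/-- V_Q : linear span of the face Q. -/
def VQ {n : ℕ} (Q : Set (Fin n → ℝ)) : Submodule ℝ (Fin n → ℝ) := Submodule.span ℝ Q

/-- R_Q = { -L_Q(u) : u ∈ (M_Q \ M_Q') ∩ V_Q }. -/
def RQ {n : ℕ} (Γ : Set (Fin n → ℕ)) (Q : Set (Fin n → ℝ)) (v0 : Fin n → ℕ)
    (L : (Fin n → ℝ) →ₗ[ℝ] ℝ) : Set ℝ :=
  {x | ∃ u ∈ MQ Γ Q \ MQk Γ Q v0 1, toR u ∈ VQ Q ∧ x = - L (toR u)}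

/-- Q is contained in some coordinate hyperplane. -/
def InCoordHyp {n : ℕ} (Q : Set (Fin n → ℝ)) : Prop := ∃ i, ∀ q ∈ Q, q i = 0

/-- The subgroup G_Q of ℤⁿ generated by differences of elements of Γ ∩ Q. -/
def diffGroup {n : ℕ} (Γ : Set (Fin n → ℕ)) (Q : Set (Fin n → ℝ)) :
    AddSubgroup (Fin n → ℤ) :=
  AddSubgroup.closure
    {d | ∃ u ∈ Γ, natR u ∈ Q ∧ ∃ v ∈ Γ, natR v ∈ Q ∧ d = natZ u - natZ v}

end BS

/-!
Because `Γ` is closed under adding exponents, it contains a point `m • e` on the diagonal; since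
`L ≥ 1` on the Newton polyhedron, `m * L e ≥ 1`, so `L e > 0`. Each generator `u - v` of the
difference semigroup (`v` on `Q`) has `L (u - v) = L u - 1 ≥ 0`, hence `L ≥ L e` on
`M_Q = e + diffMonoid Γ Q`, and every element `-L u` of `R_Q` is at most `-L e < 0`.
-/

namespace BS

variable {n : ℕ}

theorem toR_add (a b : Fin n → ℤ) : toR (a + b) = toR a + toR b := by
  funext i; simp [toR]

theorem toR_zero : toR (0 : Fin n → ℤ) = 0 := by
  funext i; simp [toR]

theorem toR_natZ_sub_natZ (u v : Fin n → ℕ) : toR (natZ u - natZ v) = natR u - natR v := by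
  funext i; simp [toR, natZ, natR]

theorem natR_const (m : ℕ) : natR (fun _ => m : Fin n → ℕ) = (m : ℝ) • toR (1 : Fin n → ℤ) := by
  funext i; simp [natR, toR]

theorem IsMonIdeal.exists_const_mem {Γ : Set (Fin n → ℕ)} (hΓ : IsMonIdeal Γ) :
    ∃ m : ℕ, (fun _ => m : Fin n → ℕ) ∈ Γ := by
  obtain ⟨u, hu⟩ := hΓ.1
  refine ⟨Finset.univ.sup u, ?_⟩
  have hconst : u + (fun i => Finset.univ.sup u - u i) = fun _ => Finset.univ.sup u := by
    funext i
    simp [Nat.add_sub_cancel' (Finset.le_sup (Finset.mem_univ i) : u i ≤ Finset.univ.sup u)]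
  exact hconst ▸ hΓ.2 u hu _

theorem natR_mem_newton {Γ : Set (Fin n → ℕ)} {u : Fin n → ℕ} (hu : u ∈ Γ) :
    natR u ∈ newton Γ :=
  subset_convexHull ℝ _ ⟨u, hu, rfl⟩

section Supporting

variable {Γ : Set (Fin n → ℕ)} {Q : Set (Fin n → ℝ)} {L : (Fin n → ℝ) →ₗ[ℝ] ℝ}

theorem one_le_of_mem_newton (hL1 : ∀ q ∈ Q, L q = 1) (hLgt : ∀ x ∈ newton Γ \ Q, 1 < L x)
    {x : Fin n → ℝ} (hx : x ∈ newton Γ) : 1 ≤ L x := by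
  by_cases hxQ : x ∈ Q
  · exact (hL1 x hxQ).ge
  · exact (hLgt x ⟨hx, hxQ⟩).le

theorem pos_apply_one (hΓ : IsMonIdeal Γ) (hL1 : ∀ q ∈ Q, L q = 1)
    (hLgt : ∀ x ∈ newton Γ \ Q, 1 < L x) : 0 < L (toR (1 : Fin n → ℤ)) := by
  obtain ⟨m, hm⟩ := hΓ.exists_const_mem
  have h : 1 ≤ (m : ℝ) * L (toR 1) := by
    simpa [natR_const, smul_eq_mul] using one_le_of_mem_newton hL1 hLgt (natR_mem_newton hm)
  exact pos_of_mul_pos_right (by linarith) m.cast_nonneg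

theorem nonneg_of_mem_diffMonoid (hL1 : ∀ q ∈ Q, L q = 1) (hLgt : ∀ x ∈ newton Γ \ Q, 1 < L x)
    {d : Fin n → ℤ} (hd : d ∈ diffMonoid Γ Q) : 0 ≤ L (toR d) := by
  induction hd using AddSubmonoid.closure_induction with
  | mem d hgen =>
    obtain ⟨u, hu, v, -, hvQ, rfl⟩ := hgen
    rw [toR_natZ_sub_natZ, map_sub, hL1 _ hvQ, sub_nonneg]
    exact one_le_of_mem_newton hL1 hLgt (natR_mem_newton hu)
  | zero => simp [toR_zero]
  | add a b _ _ ha hb => rw [toR_add, map_add]; exact add_nonneg ha hb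

theorem apply_one_le_of_mem_MQ (hL1 : ∀ q ∈ Q, L q = 1) (hLgt : ∀ x ∈ newton Γ \ Q, 1 < L x)
    {u : Fin n → ℤ} (hu : u ∈ MQ Γ Q) : L (toR 1) ≤ L (toR u) := by
  have hsplit : toR u = toR (u - 1) + toR 1 := by rw [← toR_add, sub_add_cancel]
  rw [hsplit, map_add, le_add_iff_nonneg_left]
  exact nonneg_of_mem_diffMonoid hL1 hLgt hu

end Supporting

end BS

theorem RQ_negative_general {n : ℕ} (Γ : Set (Fin n → ℕ)) (hΓ : BS.IsMonIdeal Γ)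
    (Q : Set (Fin n → ℝ))
    (v0 : Fin n → ℕ)
    (L : (Fin n → ℝ) →ₗ[ℝ] ℝ) (hL1 : ∀ q ∈ Q, L q = 1)
    (hLgt : ∀ x ∈ BS.newton Γ \ Q, 1 < L x)
    (hLrat : ∀ u : Fin n → ℤ, ∃ q : ℚ, L (BS.toR u) = (q : ℝ)) :
    0 < L (BS.toR (1 : Fin n → ℤ)) ∧
    ∀ x ∈ BS.RQ Γ Q v0 L,
      x ≤ - L (BS.toR (1 : Fin n → ℤ)) ∧ x < 0 ∧ ∃ q : ℚ, x = (q : ℝ) := by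
  have hLe := BS.pos_apply_one hΓ hL1 hLgt
  refine ⟨hLe, ?_⟩
  rintro x ⟨u, ⟨huM, -⟩, -, rfl⟩
  have hge := BS.apply_one_le_of_mem_MQ hL1 hLgt huM
  obtain ⟨q, hq⟩ := hLrat u
  exact ⟨by linarith, by linarith, -q, by rw [hq, Rat.cast_neg]⟩

/-- With L_Q = 1 on Q and L_Q > 1 on P_a \\ Q: L_Q(e) > 0 and every element of R_Q
is at most -L_Q(e); in particular every element of R_Q is a negative rational. -/
theorem RQ_negative {n : ℕ} (Γ : Set (Fin n → ℕ)) (hΓ : BS.IsMonIdeal Γ)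
    (hproper : (0 : Fin n → ℕ) ∉ Γ)
    (Q : Set (Fin n → ℝ)) (hface : IsExposed ℝ (BS.newton Γ) Q)
    (hnc : ¬ BS.InCoordHyp Q)
    (v0 : Fin n → ℕ) (hv0 : v0 ∈ Γ) (hv0Q : BS.natR v0 ∈ Q)
    (L : (Fin n → ℝ) →ₗ[ℝ] ℝ) (hL1 : ∀ q ∈ Q, L q = 1)
    (hLgt : ∀ x ∈ BS.newton Γ \ Q, 1 < L x)
    (hLrat : ∀ u : Fin n → ℤ, ∃ q : ℚ, L (BS.toR u) = (q : ℝ)) :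
    0 < L (BS.toR (1 : Fin n → ℤ)) ∧
    ∀ x ∈ BS.RQ Γ Q v0 L,
      x ≤ - L (BS.toR (1 : Fin n → ℤ)) ∧ x < 0 ∧ ∃ q : ℚ, x = (q : ℝ) :=
  RQ_negative_general Γ hΓ Q v0 L hL1 hLgt hLrat
end

section
/- For n = 2, if Q is the unbounded vertical face Q = {(a, y) : y ≥ b} of P_a with a > 0, then R_Q = {-k/a : 1 ≤ k ≤ a}. -/
/-!
Let `l` be a linear functional exposing the ray `Q = {(a, y) : y ≥ b}` of `P_a`. Since `Q` is
unbounded upwards, `l` does not see the second coordinate, and since `v₀ + (1, 0) ∈ P_a` lies off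
`Q`, `l` is strictly decreasing in the first one. Hence every exponent `u` has `u₀ ≥ a`, so all
differences `u - v` with `v ∈ Q` have nonnegative first coordinate; conversely `(1, 0)` and
`±(0, 1)` are such differences. Thus the difference monoid is the half-plane `{d₀ ≥ 0}`,
`M_Q = {m₀ ≥ 1}`, `M_Q' = {m₀ ≥ a + 1}`, and `-L_Q` takes the values `-k/a`, `1 ≤ k ≤ a`, on
`M_Q \ M_Q'`.
-/

open Set

namespace BS

@[simp] lemma natR_apply {n : ℕ} (u : Fin n → ℕ) (i : Fin n) : natR u i = u i := rfl

@[simp] lemma natZ_apply {n : ℕ} (u : Fin n → ℕ) (i : Fin n) : natZ u i = u i := rfl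

@[simp] lemma toR_apply {n : ℕ} (u : Fin n → ℤ) (i : Fin n) : toR u i = u i := rfl

lemma natR_add_single {n : ℕ} (u : Fin n → ℕ) (i : Fin n) :
    natR (u + Pi.single i 1) = natR u + Pi.single i 1 := by
  ext j
  by_cases h : j = i <;> simp [h]

lemma natZ_add_single {n : ℕ} (u : Fin n → ℕ) (i : Fin n) :
    natZ (u + Pi.single i 1) = natZ u + Pi.single i 1 := by
  ext j
  by_cases h : j = i <;> simp [h]

abbrev verticalRay (a b : ℝ) : Set (Fin 2 → ℝ) := {x | x 0 = a ∧ b ≤ x 1}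

lemma add_single_one_mem_verticalRay {a b : ℝ} {p : Fin 2 → ℝ} (hp : p ∈ verticalRay a b) :
    p + Pi.single 1 1 ∈ verticalRay a b :=
  ⟨by simpa using hp.1, by simpa using hp.2.trans (le_add_of_nonneg_right zero_le_one)⟩

lemma span_verticalRay {a : ℝ} (ha : a ≠ 0) (b : ℝ) :
    Submodule.span ℝ (verticalRay a b) = ⊤ := by
  have hp : ![a, b] ∈ verticalRay a b := by simp
  have he₁ : (Pi.single 1 1 : Fin 2 → ℝ) ∈ Submodule.span ℝ (verticalRay a b) := by
    simpa only [add_sub_cancel_left] using Submodule.sub_mem (Submodule.span ℝ (verticalRay a b))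
      (Submodule.subset_span (add_single_one_mem_verticalRay hp)) (Submodule.subset_span hp)
  have he₀ : (Pi.single 0 1 : Fin 2 → ℝ) ∈ Submodule.span ℝ (verticalRay a b) := by
    have h := Submodule.smul_mem _ a⁻¹
      (Submodule.sub_mem _ (Submodule.subset_span hp) (Submodule.smul_mem _ b he₁))
    convert h using 1
    ext i
    fin_cases i <;> simp [Matrix.vecHead, Matrix.vecTail, ha]
  rw [eq_top_iff, ← (Pi.basisFun ℝ (Fin 2)).span_eq, Submodule.span_le]
  rintro _ ⟨i, rfl⟩
  fin_cases i <;> simpa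

lemma le_apply_zero_of_isExposed_verticalRay {K : Set (Fin 2 → ℝ)} {a b : ℝ}
    (hK : IsExposed ℝ K (verticalRay a b)) {p : Fin 2 → ℝ} (hp : p ∈ verticalRay a b)
    (hpK : p + Pi.single 0 1 ∈ K) {y : Fin 2 → ℝ} (hy : y ∈ K) : a ≤ y 0 := by
  obtain ⟨l, hl⟩ := hK ⟨p, hp⟩
  have hface : ∀ x, x ∈ verticalRay a b ↔ x ∈ K ∧ ∀ z ∈ K, l z ≤ l x := fun x => by
    rw [hl]; rfl
  obtain ⟨hpK', hp_max⟩ := (hface p).1 hp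
  obtain ⟨hp₁K, hp₁_max⟩ := (hface _).1 (add_single_one_mem_verticalRay hp)
  have hl₁ : l (Pi.single 1 1) = 0 := by
    have h₁ := hp_max _ hp₁K
    have h₂ := hp₁_max _ hpK'
    rw [map_add] at h₁ h₂
    linarith
  have hl₀ : l (Pi.single 0 1) < 0 := by
    have hp₀ : p + Pi.single 0 1 ∉ verticalRay a b := fun h => by simpa [hp.1] using h.1
    rw [hface] at hp₀
    push Not at hp₀
    obtain ⟨z, hzK, hz⟩ := hp₀ hpK
    have := hp_max z hzK
    rw [map_add] at hz
    linarith
  have hdecomp : y - p = (y 0 - a) • Pi.single 0 1 + (y 1 - p 1) • Pi.single 1 1 := by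
    ext i
    fin_cases i <;> simp [hp.1]
  have hyp : l (y - p) ≤ 0 := by
    rw [map_sub]
    linarith [hp_max y hy]
  rw [hdecomp, map_add, map_smul, map_smul, hl₁, smul_eq_mul, smul_zero, add_zero] at hyp
  nlinarith

lemma le_apply_zero_of_mem_of_isExposed {a b : ℝ} {Γ : Set (Fin 2 → ℕ)} (hΓ : IsMonIdeal Γ)
    (hface : IsExposed ℝ (newton Γ) (verticalRay a b)) {v₀ : Fin 2 → ℕ} (hv₀ : v₀ ∈ Γ)
    (hv₀Q : natR v₀ ∈ verticalRay a b) {u : Fin 2 → ℕ} (hu : u ∈ Γ) : a ≤ u 0 := by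
  have hmem : ∀ w ∈ Γ, natR w ∈ newton Γ := fun w hw => subset_convexHull ℝ _ ⟨w, hw, rfl⟩
  refine le_apply_zero_of_isExposed_verticalRay hface hv₀Q ?_ (hmem u hu)
  rw [← natR_add_single]
  exact hmem _ (hΓ.2 v₀ hv₀ _)

lemma natZ_sub_natZ_mem_diffMonoid {n : ℕ} {Γ : Set (Fin n → ℕ)} {Q : Set (Fin n → ℝ)}
    {u v : Fin n → ℕ} (hu : u ∈ Γ) (hv : v ∈ Γ) (hvQ : natR v ∈ Q) :
    natZ u - natZ v ∈ diffMonoid Γ Q :=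
  AddSubmonoid.subset_closure ⟨u, hu, v, hv, hvQ, rfl⟩

lemma apply_nonneg_of_mem_diffMonoid {n : ℕ} {Γ : Set (Fin n → ℕ)} {Q : Set (Fin n → ℝ)}
    {i : Fin n} {c : ℕ} (hΓ : ∀ u ∈ Γ, c ≤ u i) (hQ : ∀ v ∈ Γ, natR v ∈ Q → v i = c)
    {d : Fin n → ℤ} (hd : d ∈ diffMonoid Γ Q) : 0 ≤ d i := by
  induction hd using AddSubmonoid.closure_induction with
  | mem d hd =>
    obtain ⟨u, hu, v, hv, hvQ, rfl⟩ := hd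
    have := hΓ u hu
    have := hQ v hv hvQ
    simp only [Pi.sub_apply, natZ_apply, sub_nonneg]
    omega
  | zero => exact le_rfl
  | add d d' _ _ hd hd' => exact add_nonneg hd hd'

lemma mem_of_apply_zero_nonneg {S : AddSubmonoid (Fin 2 → ℤ)} (h₀ : Pi.single 0 1 ∈ S)
    (h₁ : Pi.single 1 1 ∈ S) (h₁' : -Pi.single 1 1 ∈ S) {d : Fin 2 → ℤ} (hd : 0 ≤ d 0) :
    d ∈ S := by
  have hdecomp : d = (d 0).toNat • Pi.single 0 1 + (d 1).toNat • Pi.single 1 1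
      + (-d 1).toNat • -Pi.single 1 1 := by
    ext i
    fin_cases i <;> simp <;> omega
  rw [hdecomp]
  exact add_mem (add_mem (nsmul_mem h₀ _) (nsmul_mem h₁ _)) (nsmul_mem h₁' _)

theorem mem_diffMonoid_verticalRay_iff {a : ℕ} {b : ℝ} {Γ : Set (Fin 2 → ℕ)}
    (hΓ : IsMonIdeal Γ) (hface : IsExposed ℝ (newton Γ) (verticalRay a b))
    {v₀ : Fin 2 → ℕ} (hv₀ : v₀ ∈ Γ) (hv₀Q : natR v₀ ∈ verticalRay a b) (d : Fin 2 → ℤ) :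
    d ∈ diffMonoid Γ (verticalRay a b) ↔ 0 ≤ d 0 := by
  refine ⟨apply_nonneg_of_mem_diffMonoid (c := a) (fun u hu => ?_) fun v _ hvQ => ?_, fun hd => ?_⟩
  · exact_mod_cast le_apply_zero_of_mem_of_isExposed hΓ hface hv₀ hv₀Q hu
  · exact Nat.cast_injective (hvQ.1 : (v 0 : ℝ) = a)
  · have hv₁ := hΓ.2 v₀ hv₀ (Pi.single 1 1)
    have hv₁Q : natR (v₀ + Pi.single 1 1) ∈ verticalRay a b := by
      rw [natR_add_single]
      exact add_single_one_mem_verticalRay hv₀Q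
    refine mem_of_apply_zero_nonneg ?_ ?_ ?_ hd
    · simpa [natZ_add_single] using
        natZ_sub_natZ_mem_diffMonoid (hΓ.2 v₀ hv₀ (Pi.single 0 1)) hv₀ hv₀Q
    · simpa [natZ_add_single] using natZ_sub_natZ_mem_diffMonoid hv₁ hv₀ hv₀Q
    · simpa [natZ_add_single] using natZ_sub_natZ_mem_diffMonoid hv₀ hv₁ hv₁Q

section HalfPlane

variable {n : ℕ} {Γ : Set (Fin n → ℕ)} {Q : Set (Fin n → ℝ)} {i : Fin n}

lemma mem_MQ_iff (h : ∀ d, d ∈ diffMonoid Γ Q ↔ 0 ≤ d i) (m : Fin n → ℤ) :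
    m ∈ MQ Γ Q ↔ 1 ≤ m i := by
  rw [MQ, mem_ofPred_eq, h, Pi.sub_apply, Pi.one_apply, sub_nonneg]

lemma mem_MQk_iff (h : ∀ d, d ∈ diffMonoid Γ Q ↔ 0 ≤ d i) (v₀ : Fin n → ℕ) (k : ℕ)
    (m : Fin n → ℤ) : m ∈ MQk Γ Q v₀ k ↔ k * v₀ i + 1 ≤ m i := by
  rw [MQk, mem_ofPred_eq, mem_MQ_iff h, Pi.sub_apply, Pi.smul_apply, natZ_apply, smul_eq_mul,
    le_sub_iff_add_le']

end HalfPlane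

end BS

theorem vertical_face_RQ_general (a b : ℕ) (ha : 0 < a)
    (Γ : Set (Fin 2 → ℕ)) (hΓ : BS.IsMonIdeal Γ)
    (hface : IsExposed ℝ (BS.newton Γ)
      {x : Fin 2 → ℝ | x 0 = (a : ℝ) ∧ (b : ℝ) ≤ x 1})
    (v0 : Fin 2 → ℕ) (hv0 : v0 ∈ Γ)
    (hv0Q : BS.natR v0 ∈ {x : Fin 2 → ℝ | x 0 = (a : ℝ) ∧ (b : ℝ) ≤ x 1})
    (L : (Fin 2 → ℝ) →ₗ[ℝ] ℝ) (hL : ∀ x, L x = x 0 / (a : ℝ)) :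
    BS.RQ Γ {x : Fin 2 → ℝ | x 0 = (a : ℝ) ∧ (b : ℝ) ≤ x 1} v0 L =
      {x : ℝ | ∃ k : ℕ, 1 ≤ k ∧ k ≤ a ∧ x = -(k : ℝ) / (a : ℝ)} := by
  have hdiff := BS.mem_diffMonoid_verticalRay_iff hΓ hface hv0 hv0Q
  have hv00 : v0 0 = a := Nat.cast_injective (hv0Q.1 : (v0 0 : ℝ) = a)
  ext x
  constructor
  · rintro ⟨u, ⟨hu, hu'⟩, -, rfl⟩
    rw [BS.mem_MQ_iff hdiff] at hu
    rw [BS.mem_MQk_iff hdiff, hv00] at hu'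
    lift u 0 to ℕ using by omega with k hk
    refine ⟨k, by omega, by omega, ?_⟩
    rw [hL, BS.toR_apply, ← hk, neg_div, Int.cast_natCast]
  · rintro ⟨k, hk₁, hk₂, rfl⟩
    refine ⟨Pi.single 0 (k : ℤ), ⟨?_, ?_⟩, ?_, ?_⟩
    · rw [BS.mem_MQ_iff hdiff]
      simpa using hk₁
    · rw [BS.mem_MQk_iff hdiff, hv00]
      simpa using hk₂
    · rw [BS.VQ, BS.span_verticalRay (Nat.cast_ne_zero.2 ha.ne')]
      trivial
    · rw [hL, neg_div]
      simp

/-- For n = 2 and the unbounded vertical face Q = {(a,y) : y ≥ b} with a > 0: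
R_Q = {-k/a : 1 ≤ k ≤ a}. -/
theorem vertical_face_RQ (a b : ℕ) (ha : 0 < a) (hb : 0 < b)
    (Γ : Set (Fin 2 → ℕ)) (hΓ : BS.IsMonIdeal Γ)
    (hface : IsExposed ℝ (BS.newton Γ)
      {x : Fin 2 → ℝ | x 0 = (a : ℝ) ∧ (b : ℝ) ≤ x 1})
    (v0 : Fin 2 → ℕ) (hv0 : v0 ∈ Γ)
    (hv0Q : BS.natR v0 ∈ {x : Fin 2 → ℝ | x 0 = (a : ℝ) ∧ (b : ℝ) ≤ x 1})
    (L : (Fin 2 → ℝ) →ₗ[ℝ] ℝ) (hL : ∀ x, L x = x 0 / (a : ℝ)) :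
    BS.RQ Γ {x : Fin 2 → ℝ | x 0 = (a : ℝ) ∧ (b : ℝ) ≤ x 1} v0 L =
      {x : ℝ | ∃ k : ℕ, 1 ≤ k ∧ k ≤ a ∧ x = -(k : ℝ) / (a : ℝ)} :=
  vertical_face_RQ_general a b ha Γ hΓ hface v0 hv0 hv0Q L hL
end
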